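/- Let $c$ be a condition $(k, \sigma_0, \ldots, \sigma_{k-1}, P)$ where $P$ is a nonempty collection of ordered $k$-partitions of $\omega$, and suppose for every string $\tau = \tau_0 \oplus \cdots \oplus \tau_{k-1}$ with $P_\tau \neq \emptyset$ there is an $X \in P_\tau$ and $i < k$ such that $X_i$ contains some $m \in A$ and some $n \in \overline{A}$ with $m, n \geq |\tau_i|$. Then there exists $Y = Y_0 \oplus \cdots \oplus Y_{k-1} \in \overline{P}$ (the closure of $P$ in Cantor space, assuming $P$ is closed, so $Y \in P$) and an index $i < k$ such that both $Y_i \cap A$ and $Y_i \cap \overline{A}$ are infinite. -/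

import Mathlib

/-- A string `τ` is an initial segment of `X : ℕ → Bool`. -/
def IsPrefixOfFun (τ : List Bool) (X : ℕ → Bool) : Prop :=
  ∀ i (h : i < τ.length), X i = τ.get ⟨i, h⟩

/-!
Starting from any member of `P`, apply the hypothesis to longer and longer initial segments:
each application yields a new member of `P`, extending the current segment, one of whose parts
picks up an element of `A` and an element of `Aᶜ` beyond it. The extensions cohere, so they
converge in Cantor space to some `Y`, which lies in `P` because `P` is closed. Since there are
only `k` parts, one part index `i` is used at infinitely many stages, and then `Y i` contains
infinitely many elements of `A` and of `Aᶜ`.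
-/

open Filter Set Topology

section

variable {ι α : Type*}

theorem isPrefixOfFun_ofFn_iff {N : ℕ} {x z : ℕ → Bool} :
    IsPrefixOfFun (List.ofFn fun m : Fin N => x m) z ↔ EqOn x z (Iio N) := by
  simp [IsPrefixOfFun, EqOn, eq_comm]

def AgreeBelow (N : ℕ) (X Z : ι → ℕ → α) : Prop :=
  ∀ j, EqOn (X j) (Z j) (Iio N)

theorem AgreeBelow.trans {N : ℕ} {X Y Z : ι → ℕ → α} (h₁ : AgreeBelow N X Y)
    (h₂ : AgreeBelow N Y Z) : AgreeBelow N X Z :=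
  fun j => (h₁ j).trans (h₂ j)

theorem AgreeBelow.mono {M N : ℕ} {X Z : ι → ℕ → α} (h : AgreeBelow N X Z) (hMN : M ≤ N) :
    AgreeBelow M X Z :=
  fun j => (h j).mono (Iio_subset_Iio hMN)

theorem tendsto_of_agreeBelow [TopologicalSpace α] {X : ℕ → ι → ℕ → α} {Y : ι → ℕ → α}
    {N : ℕ → ℕ} (hN : Tendsto N atTop atTop) (h : ∀ n, AgreeBelow (N n) (X n) Y) :
    Tendsto X atTop (𝓝 Y) :=
  tendsto_pi_nhds.2 fun j => tendsto_pi_nhds.2 fun m => tendsto_nhds_of_eventually_eq <|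
    (hN.eventually_gt_atTop m).mono fun n hn => h n j hn

theorem exists_agreeBelow_limit {X : ℕ → ι → ℕ → α} {N : ℕ → ℕ} (hN : StrictMono N)
    (h : ∀ n, AgreeBelow (N n) (X n) (X (n + 1))) :
    ∃ Y, ∀ n, AgreeBelow (N n) (X n) Y := by
  have hle : ∀ n n', n ≤ n' → AgreeBelow (N n) (X n) (X n') := by
    intro n n' hnn'
    induction n', hnn' using Nat.le_induction with
    | base => exact fun _ _ _ => rfl
    | succ n' hnn' ih => exact ih.trans ((h n').mono (hN.monotone hnn'))
  -- `X (m + 1)` is already final at position `m`, since `m < m + 1 ≤ N (m + 1)`.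
  refine ⟨fun j m => X (m + 1) j m, fun n j m hm => ?_⟩
  have hm' : m < N (m + 1) := Nat.lt_of_succ_le (hN.id_le (m + 1))
  exact (hle n _ (le_max_left n (m + 1)) j hm).trans
    (hle (m + 1) _ (le_max_right n (m + 1)) j hm').symm

def SplitsIn (A : Set α) (y : α → Bool) (I : Set α) : Prop :=
  (∃ a ∈ I, y a = true ∧ a ∈ A) ∧ ∃ b ∈ I, y b = true ∧ b ∉ A

theorem SplitsIn.mono {A I J : Set α} {y : α → Bool} (h : SplitsIn A y I) (hIJ : I ⊆ J) :
    SplitsIn A y J :=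
  ⟨let ⟨a, ha, hya, haA⟩ := h.1; ⟨a, hIJ ha, hya, haA⟩,
    let ⟨b, hb, hyb, hbA⟩ := h.2; ⟨b, hIJ hb, hyb, hbA⟩⟩

theorem SplitsIn.congr {A I : Set α} {y z : α → Bool} (h : SplitsIn A y I) (hyz : EqOn y z I) :
    SplitsIn A z I :=
  ⟨let ⟨a, ha, hya, haA⟩ := h.1; ⟨a, ha, hyz ha ▸ hya, haA⟩,
    let ⟨b, hb, hyb, hbA⟩ := h.2; ⟨b, hb, hyz hb ▸ hyb, hbA⟩⟩

theorem infinite_of_forall_splitsIn_Ioi {A : Set ℕ} {y : ℕ → Bool}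
    (h : ∀ B, SplitsIn A y (Ioi B)) :
    {n | y n = true ∧ n ∈ A}.Infinite ∧ {n | y n = true ∧ n ∉ A}.Infinite :=
  ⟨infinite_of_forall_exists_gt fun B =>
      let ⟨a, ha, hya, haA⟩ := (h B).1; ⟨a, ⟨hya, haA⟩, ha⟩,
    infinite_of_forall_exists_gt fun B =>
      let ⟨b, hb, hyb, hbA⟩ := (h B).2; ⟨b, ⟨hyb, hbA⟩, hb⟩⟩

theorem exists_seq_agreeBelow_splitsIn {A : Set ℕ} {P : Set (ι → ℕ → Bool)}
    (hext : ∀ X ∈ P, ∀ N, ∃ Z ∈ P, AgreeBelow N X Z ∧ ∃ i M, SplitsIn A (Z i) (Ico N M))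
    (hne : P.Nonempty) :
    ∃ (X : ℕ → ι → ℕ → Bool) (N : ℕ → ℕ) (I : ℕ → ι), (∀ n, X n ∈ P) ∧ StrictMono N ∧
      ∀ n, AgreeBelow (N n) (X n) (X (n + 1)) ∧
        SplitsIn A (X (n + 1) (I n)) (Ico (N n) (N (n + 1))) := by
  choose Z hZP hZ I M hsplit using hext
  let step : P × ℕ → P × ℕ := fun s => (⟨Z s.1 s.1.2 s.2, hZP _ _ _⟩, M s.1 s.1.2 s.2)
  let s : ℕ → P × ℕ := fun n => step^[n] (⟨hne.some, hne.some_mem⟩, 0)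
  have hs : ∀ n, s (n + 1) = step (s n) := fun n => Function.iterate_succ_apply' _ _ _
  have hspec : ∀ n, AgreeBelow (s n).2 ((s n).1 : ι → ℕ → Bool) (s (n + 1)).1 ∧
      SplitsIn A ((s (n + 1)).1.1 (I (s n).1 (s n).1.2 (s n).2)) (Ico (s n).2 (s (n + 1)).2) :=
    fun n => by rw [hs]; exact ⟨hZ _ _ _, hsplit _ _ _⟩
  refine ⟨fun n => (s n).1, fun n => (s n).2, fun n => I (s n).1 (s n).1.2 (s n).2,
    fun n => (s n).1.2, strictMono_nat_of_lt_succ fun n => ?_, hspec⟩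
  obtain ⟨a, ha, -⟩ := (hspec n).2.1
  exact ha.1.trans_lt ha.2

end

theorem exists_agreeBelow_splitsIn {k : ℕ} {A : Set ℕ} {P : Set (Fin k → ℕ → Bool)}
    (hstep : ∀ τ : Fin k → List Bool,
      (∃ X ∈ P, ∀ i, IsPrefixOfFun (τ i) (X i)) →
      ∃ X ∈ P, (∀ i, IsPrefixOfFun (τ i) (X i)) ∧
        ∃ i : Fin k, ∃ a b : ℕ, (τ i).length ≤ a ∧ (τ i).length ≤ b ∧
          X i a = true ∧ X i b = true ∧ a ∈ A ∧ b ∉ A)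
    {X : Fin k → ℕ → Bool} (hX : X ∈ P) (N : ℕ) :
    ∃ Z ∈ P, AgreeBelow N X Z ∧ ∃ i M, SplitsIn A (Z i) (Ico N M) := by
  let τ : Fin k → List Bool := fun j => List.ofFn fun m : Fin N => X j m
  have hτ : ∀ Z, (∀ j, IsPrefixOfFun (τ j) (Z j)) ↔ AgreeBelow N X Z :=
    fun Z => forall_congr' fun j => isPrefixOfFun_ofFn_iff
  obtain ⟨Z, hZ, hpre, i, a, b, ha, hb, hZa, hZb, haA, hbA⟩ :=
    hstep τ ⟨X, hX, (hτ X).2 fun _ _ _ => rfl⟩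
  simp only [τ, List.length_ofFn] at ha hb
  exact ⟨Z, hZ, (hτ Z).1 hpre, i, max a b + 1,
    ⟨a, ⟨ha, by omega⟩, hZa, haA⟩, b, ⟨hb, by omega⟩, hZb, hbA⟩

theorem stmt6_general (k : ℕ) (A : Set ℕ) (P : Set (Fin k → ℕ → Bool))
    (hne : P.Nonempty) (hcl : IsClosed P)
    (hstep : ∀ τ : Fin k → List Bool,
      (∃ X ∈ P, ∀ i, IsPrefixOfFun (τ i) (X i)) →
      ∃ X ∈ P, (∀ i, IsPrefixOfFun (τ i) (X i)) ∧
        ∃ i : Fin k, ∃ a b : ℕ, (τ i).length ≤ a ∧ (τ i).length ≤ b ∧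
          X i a = true ∧ X i b = true ∧ a ∈ A ∧ b ∉ A) :
    ∃ Y ∈ P, ∃ i : Fin k,
      {n | Y i n = true ∧ n ∈ A}.Infinite ∧ {n | Y i n = true ∧ n ∉ A}.Infinite := by
  obtain ⟨X, N, I, hXP, hN, hX⟩ :=
    exists_seq_agreeBelow_splitsIn (fun X hX N => exists_agreeBelow_splitsIn hstep hX N) hne
  obtain ⟨Y, hY⟩ := exists_agreeBelow_limit hN fun n => (hX n).1
  have hYP : Y ∈ P :=
    hcl.mem_of_tendsto (tendsto_of_agreeBelow hN.tendsto_atTop hY) (.of_forall hXP)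
  obtain ⟨i, hi⟩ := Finite.exists_infinite_fiber I
  refine ⟨Y, hYP, i, infinite_of_forall_splitsIn_Ioi fun B => ?_⟩
  obtain ⟨n, hn, hBn⟩ := (infinite_coe_iff.1 hi).exists_gt B
  rw [← show I n = i from hn]
  have hBN : B < N n := hBn.trans_le (hN.id_le n)
  exact ((hX n).2.congr ((hY (n + 1) (I n)).mono Ico_subset_Iio_self)).mono
    fun m hm => hBN.trans_le hm.1

/-- Acceptability (Lemma 5.1, claim): let `P` be a nonempty closed class of ordered
`k`-partitions of `ω` (coded as `Fin k → ℕ → Bool` with the product topology). If for every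
tuple of strings `τ` with `P_τ ≠ ∅` there are `X ∈ P_τ`, `i < k`, and `a ∈ A`, `b ∈ Aᶜ` in
`X i` beyond `|τ i|`, then some `Y ∈ P` has a part `Y i` meeting both `A` and `Aᶜ`
infinitely. -/
theorem stmt6 (k : ℕ) (hk : 0 < k) (A : Set ℕ) (P : Set (Fin k → ℕ → Bool))
    (hne : P.Nonempty) (hcl : IsClosed P)
    (hpart : ∀ X ∈ P, ∀ n : ℕ, ∃ i, X i n = true)
    (hstep : ∀ τ : Fin k → List Bool,
      (∃ X ∈ P, ∀ i, IsPrefixOfFun (τ i) (X i)) →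
      ∃ X ∈ P, (∀ i, IsPrefixOfFun (τ i) (X i)) ∧
        ∃ i : Fin k, ∃ a b : ℕ, (τ i).length ≤ a ∧ (τ i).length ≤ b ∧
          X i a = true ∧ X i b = true ∧ a ∈ A ∧ b ∉ A) :
    ∃ Y ∈ P, ∃ i : Fin k,
      {n | Y i n = true ∧ n ∈ A}.Infinite ∧ {n | Y i n = true ∧ n ∉ A}.Infinite :=
  stmt6_general k A P hne hcl hstep
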